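/- arXiv:1511.01721 — 4 statements merged into one kernel-verified Lean document; each statement's English description precedes it below -/
import Mathlib

section
/- Let F be a probability distribution on R^d, φ(θ) = log E[exp(⟨θ,X⟩)] its log-Laplace transform (where X has law F), and ψ(x) = sup_{θ ∈ dom(φ)} (⟨θ,x⟩ - φ(θ)) its convex conjugate. Then the relative interior of the convex hull of the support of F equals the relative interior of the domain of ψ. -/
open MeasureTheory Set Filter Topology
open scoped ENNReal NNReal

/-!
If `x` lies outside the closed convex hull of the support, a separating functional `θ` with
`⟪θ, y⟫ ≤ u < ⟪θ, x⟫` on the support gives `L (n θ) ≤ exp (n u)`, so `ψ x ≥ n (⟪θ, x⟫ - u) → ∞`.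
If `x` lies in the relative interior, every direction of the affine span of the support carries
mass ahead of `x`; since `ℓ ↦ μ {y | ℓ x < ℓ y}` is lower semicontinuous, compactness of the
normalised directions makes this mass at least some `c > 0` uniformly, whence
`L θ ≥ c exp ⟪θ, x⟫` and `ψ x ≤ -log c`. Thus `ri (cv F) ⊆ dom ψ ⊆ closure (cv F)`, and nested
convex sets in this position have the same relative interior.
-/

theorem intrinsicInterior_eq_interior_of_affineSpan_eq_top {𝕜 V P : Type*} [Ring 𝕜]
    [AddCommGroup V] [Module 𝕜 V] [TopologicalSpace P] [AddTorsor V P] {s : Set P}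
    (h : affineSpan 𝕜 s = ⊤) : intrinsicInterior 𝕜 s = interior s := by
  have hval : IsHomeomorph (Subtype.val : (⊤ : AffineSubspace 𝕜 P) → P) :=
    isHomeomorph_iff_isEmbedding_surjective.2
      ⟨Topology.IsEmbedding.subtypeVal, fun x => ⟨⟨x, AffineSubspace.mem_top 𝕜 V x⟩, rfl⟩⟩
  rw [intrinsicInterior, h, hval.image_interior, image_preimage_eq_of_subset (by simp)]

section ConvexGeometry

variable {E : Type*} [AddCommGroup E] [Module ℝ E] [TopologicalSpace E] [ContinuousAdd E]
  [ContinuousSMul ℝ E]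

theorem eventually_add_smul_mem_of_mem_intrinsicInterior {s : Set E} {x w : E}
    (hx : x ∈ intrinsicInterior ℝ s) (hw : w ∈ (affineSpan ℝ s).direction) :
    ∀ᶠ t in 𝓝 (0 : ℝ), x + t • w ∈ s := by
  obtain ⟨⟨x, hxA⟩, hint, rfl⟩ := hx
  have hmem (t : ℝ) : x + t • w ∈ affineSpan ℝ s := by
    simpa [add_comm] using AffineSubspace.vadd_mem_of_mem_direction (Submodule.smul_mem _ t hw) hxA
  let g : ℝ → affineSpan ℝ s := fun t => ⟨x + t • w, hmem t⟩
  have hg : Continuous g :=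
    (continuous_const.add (continuous_id.smul continuous_const)).subtype_mk _
  have hg0 : g 0 = ⟨x, hxA⟩ := Subtype.ext (by simp [g])
  have hnhds : g ⁻¹' interior ((↑) ⁻¹' s) ∈ 𝓝 (0 : ℝ) :=
    hg.continuousAt.preimage_mem_nhds (hg0 ▸ isOpen_interior.mem_nhds hint)
  exact mem_of_superset hnhds fun t ht => show g t ∈ (↑) ⁻¹' s from interior_subset ht

theorem exists_lt_apply_of_mem_intrinsicInterior_convexHull {S : Set E} {x w : E}
    (hx : x ∈ intrinsicInterior ℝ (convexHull ℝ S)) (hw : w ∈ (affineSpan ℝ S).direction)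
    (ℓ : E →L[ℝ] ℝ) (hℓw : 0 < ℓ w) : ∃ z ∈ S, ℓ x < ℓ z := by
  rw [← affineSpan_convexHull] at hw
  obtain ⟨t, ht, htpos⟩ := ((eventually_add_smul_mem_of_mem_intrinsicInterior hx hw).filter_mono
    nhdsWithin_le_nhds |>.and self_mem_nhdsWithin).exists (f := 𝓝[>] (0 : ℝ))
  by_contra! hS
  have hle : ℓ (x + t • w) ≤ ℓ x :=
    convexHull_min hS (convex_halfSpace_le ℓ.toLinearMap.isLinear (ℓ x)) ht
  rw [map_add, map_smul, smul_eq_mul] at hle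
  nlinarith [mul_pos (show (0 : ℝ) < t from htpos) hℓw]

theorem measure_setOf_lt_pos_of_mem_intrinsicInterior [MeasurableSpace E] {μ : Measure E}
    {x w : E} (hx : x ∈ intrinsicInterior ℝ (convexHull ℝ μ.support))
    (hw : w ∈ (affineSpan ℝ μ.support).direction) (ℓ : E →L[ℝ] ℝ) (hℓw : 0 < ℓ w) :
    0 < μ {y | ℓ x < ℓ y} := by
  obtain ⟨z, hz, hxz⟩ := exists_lt_apply_of_mem_intrinsicInterior_convexHull hx hw ℓ hℓw
  exact (μ.mem_support_iff_forall z).1 hz _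
    ((isOpen_lt continuous_const ℓ.continuous).mem_nhds hxz)

end ConvexGeometry

section RelativeInterior

variable {V : Type*} [NormedAddCommGroup V] [NormedSpace ℝ V] [FiniteDimensional ℝ V]
  {C D : Set V}

theorem Convex.intrinsicInterior_eq_of_interior_subset_of_subset_closure (hC : Convex ℝ C)
    (hspan : affineSpan ℝ C = ⊤) (hCD : interior C ⊆ D) (hDC : D ⊆ closure C) :
    intrinsicInterior ℝ D = intrinsicInterior ℝ C := by
  have hne : (interior C).Nonempty := (hC.interior_nonempty_iff_affineSpan_eq_top).2 hspan
  have hspanD : affineSpan ℝ D = ⊤ :=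
    top_unique <| (isOpen_interior.affineSpan_eq_top hne).ge.trans (affineSpan_mono ℝ hCD)
  rw [intrinsicInterior_eq_interior_of_affineSpan_eq_top hspan,
    intrinsicInterior_eq_interior_of_affineSpan_eq_top hspanD]
  exact (interior_mono hDC).trans_eq (hC.interior_closure_eq_interior_of_nonempty_interior hne)
    |>.antisymm (interior_maximal hCD isOpen_interior)

theorem Convex.intrinsicInterior_eq_of_intrinsicInterior_subset_of_subset_closure
    (hC : Convex ℝ C) (hCD : intrinsicInterior ℝ C ⊆ D) (hDC : D ⊆ closure C) :
    intrinsicInterior ℝ D = intrinsicInterior ℝ C := by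
  rcases C.eq_empty_or_nonempty with rfl | ⟨p, hp⟩
  · rw [closure_empty, subset_empty_iff] at hDC
    rw [hDC]
  set A := affineSpan ℝ C
  have hCA : C ⊆ A := subset_affineSpan ℝ C
  have hDA : D ⊆ A := hDC.trans <| closure_minimal hCA A.closed_of_finiteDimensional
  let p' : A := ⟨p, hCA hp⟩
  have : Nonempty A := ⟨p'⟩
  -- identify `A` with its direction, in which the preimage of `C` has full affine span
  let φ : A.direction →ᵃⁱ[ℝ] V :=
    A.subtypeₐᵢ.comp (AffineIsometryEquiv.vaddConst ℝ p').toAffineIsometry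
  have hrange : range φ = A := by
    refine Subset.antisymm (range_subset_iff.2 fun v => (v +ᵥ p').2) fun x hx => ?_
    exact ⟨(AffineIsometryEquiv.vaddConst ℝ p').symm ⟨x, hx⟩, by simp [φ]⟩
  have himC : φ '' (φ ⁻¹' C) = C := image_preimage_eq_of_subset (hrange ▸ hCA)
  have himD : φ '' (φ ⁻¹' D) = D := image_preimage_eq_of_subset (hrange ▸ hDA)
  have hconv : Convex ℝ (φ ⁻¹' C) := hC.affine_preimage φ.toAffineMap
  have hspan : affineSpan ℝ (φ ⁻¹' C) = ⊤ := by
    have : Nonempty C := ⟨⟨p, hp⟩⟩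
    change affineSpan ℝ ((AffineIsometryEquiv.vaddConst ℝ p').toAffineEquiv ⁻¹'
      ((↑) ⁻¹' C : Set A)) = ⊤
    rw [← AffineSubspace.comap_span, affineSpan_coe_preimage_eq_top, AffineSubspace.comap_top]
  have hCD' : intrinsicInterior ℝ (φ ⁻¹' C) ⊆ φ ⁻¹' D := by
    rw [← image_subset_iff, ← φ.intrinsicInterior_image, himC]
    exact hCD
  have hDC' : φ ⁻¹' D ⊆ closure (φ ⁻¹' C) := by
    rw [φ.isometry.isEmbedding.isInducing.closure_eq_preimage_closure_image, himC]
    exact preimage_mono hDC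
  rw [← himC, ← himD, φ.intrinsicInterior_image, φ.intrinsicInterior_image,
    hconv.intrinsicInterior_eq_of_interior_subset_of_subset_closure hspan
      (interior_subset_intrinsicInterior.trans hCD') hDC']

end RelativeInterior

theorem IsCompact.exists_pos_le_of_lowerSemicontinuousOn {X : Type*} [TopologicalSpace X]
    {K : Set X} (hK : IsCompact K) {g : X → ℝ≥0∞} (hg : LowerSemicontinuousOn g K)
    (hpos : ∀ x ∈ K, 0 < g x) : ∃ c, 0 < c ∧ ∀ x ∈ K, c ≤ g x := by
  rcases K.eq_empty_or_nonempty with rfl | hne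
  · exact ⟨1, one_pos, by simp⟩
  obtain ⟨a, ha, hmin⟩ := hg.exists_isMinOn hne hK
  exact ⟨g a, hpos a ha, hmin⟩

section Mass

variable {E : Type*} [NormedAddCommGroup E] [NormedSpace ℝ E] [MeasurableSpace E]

theorem lowerSemicontinuous_measure_setOf_lt (μ : Measure E) (x : E) :
    LowerSemicontinuous fun ℓ : E →L[ℝ] ℝ => μ {y | ℓ x < ℓ y} := by
  intro ℓ₀ t (ht : t < μ {y | ℓ₀ x < ℓ₀ y})
  let A : ℕ → Set E := fun n => {y | 1 / (n + 1) < ℓ₀ y - ℓ₀ x ∧ dist y x < n + 1}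
  have hmono : Monotone A := by
    intro m n hmn y ⟨hy, hyx⟩
    have : (1 : ℝ) / (n + 1) ≤ 1 / (m + 1) := by gcongr
    exact ⟨this.trans_lt hy, hyx.trans_le (by gcongr)⟩
  have hunion : ⋃ n, A n = {y | ℓ₀ x < ℓ₀ y} := by
    refine Subset.antisymm (iUnion_subset fun n y ⟨hy, _⟩ => ?_) fun y (hy : ℓ₀ x < ℓ₀ y) => ?_
    · exact sub_pos.1 (Nat.one_div_pos_of_nat.trans hy)
    · obtain ⟨m, hm⟩ := exists_nat_one_div_lt (sub_pos.2 hy)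
      obtain ⟨k, hk⟩ := exists_nat_gt (dist y x)
      have hmk : (m : ℝ) ≤ max m k := by exact_mod_cast le_max_left m k
      have hkm : (k : ℝ) ≤ max m k := by exact_mod_cast le_max_right m k
      refine mem_iUnion.2 ⟨max m k, lt_of_le_of_lt ?_ hm, by linarith⟩
      gcongr
  rw [← hunion, hmono.measure_iUnion, lt_iSup_iff] at ht
  obtain ⟨n, hn⟩ := ht
  -- on `A n` the gap `ℓ₀ y - ℓ₀ x > 1 / (n + 1)` survives perturbations of `ℓ₀` of norm
  -- `< 1 / (n + 1) ^ 2`, because `‖y - x‖ < n + 1`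
  filter_upwards [Metric.ball_mem_nhds ℓ₀ (by positivity : (0 : ℝ) < 1 / (n + 1) ^ 2)]
    with ℓ hℓ
  refine hn.trans_le (measure_mono fun y ⟨hy, hyx⟩ => ?_)
  have hperturb : |(ℓ - ℓ₀) (y - x)| < 1 / (n + 1) :=
    calc |(ℓ - ℓ₀) (y - x)| ≤ ‖ℓ - ℓ₀‖ * ‖y - x‖ := (ℓ - ℓ₀).le_opNorm (y - x)
      _ < 1 / (n + 1) ^ 2 * (n + 1) := by
        rw [← dist_eq_norm, ← dist_eq_norm]
        exact mul_lt_mul'' hℓ hyx dist_nonneg dist_nonneg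
      _ = 1 / (n + 1) := by field_simp
  have hsplit : ℓ y - ℓ x = (ℓ₀ y - ℓ₀ x) + (ℓ - ℓ₀) (y - x) := by simp
  show ℓ x < ℓ y
  linarith [neg_abs_le ((ℓ - ℓ₀) (y - x))]

variable [FiniteDimensional ℝ E] {μ : Measure E}

theorem exists_ae_le_lt_of_notMem_closure_convexHull_support {x : E}
    (hx : x ∉ closure (convexHull ℝ μ.support)) :
    ∃ ℓ : E →L[ℝ] ℝ, ∃ u, u < ℓ x ∧ ∀ᵐ y ∂μ, ℓ y ≤ u := by
  obtain ⟨ℓ, u, hlt, hux⟩ :=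
    geometric_hahn_banach_closed_point (convex_convexHull ℝ _).closure isClosed_closure hx
  have hsupp : ∀ᵐ y ∂μ, y ∈ μ.support := Measure.support_mem_ae
  exact ⟨ℓ, u, hux, hsupp.mono fun y hy =>
    (hlt y (subset_closure (subset_convexHull ℝ _ hy))).le⟩

theorem exists_pos_le_measure_setOf_lt_of_mem_intrinsicInterior {x : E}
    (hx : x ∈ intrinsicInterior ℝ (convexHull ℝ μ.support)) (P : E →L[ℝ] E)
    (hP : ∀ v, P v ∈ (affineSpan ℝ μ.support).direction) :
    ∃ c : ℝ≥0∞, 0 < c ∧ ∀ ℓ : E →L[ℝ] ℝ, ℓ.comp P = ℓ → ‖ℓ‖ = 1 → c ≤ μ {y | ℓ x < ℓ y} := by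
  set K : Set (E →L[ℝ] ℝ) := {ℓ | ℓ.comp P = ℓ} ∩ Metric.sphere 0 1
  have hK : IsCompact K := (isCompact_sphere 0 1).inter_left
    (isClosed_eq (continuous_id.clm_comp continuous_const) continuous_id)
  obtain ⟨c, hc, hcK⟩ := hK.exists_pos_le_of_lowerSemicontinuousOn
    ((lowerSemicontinuous_measure_setOf_lt μ x).lowerSemicontinuousOn K) fun ℓ ⟨hℓP, hℓ1⟩ => by
      obtain ⟨v, hv⟩ : ∃ v, ℓ v ≠ 0 := by
        by_contra! h
        simp [show ℓ = 0 from ContinuousLinearMap.ext h] at hℓ1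
      have hℓPv : ℓ (P v) = ℓ v := by rw [← ContinuousLinearMap.comp_apply, hℓP]
      rcases hv.lt_or_gt with hneg | hpos
      · refine measure_setOf_lt_pos_of_mem_intrinsicInterior hx (Submodule.neg_mem _ (hP v)) ℓ ?_
        rwa [map_neg, hℓPv, neg_pos]
      · exact measure_setOf_lt_pos_of_mem_intrinsicInterior hx (hP v) ℓ (hℓPv ▸ hpos)
  exact ⟨c, hc, fun ℓ hℓP hℓ1 => hcK ℓ ⟨hℓP, mem_sphere_zero_iff_norm.2 hℓ1⟩⟩

theorem exists_pos_le_measure_setOf_le_of_mem_intrinsicInterior {x : E}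
    (hx : x ∈ intrinsicInterior ℝ (convexHull ℝ μ.support)) :
    ∃ c : ℝ≥0, 0 < c ∧ ∀ ℓ : E →L[ℝ] ℝ, c ≤ μ {y | ℓ x ≤ ℓ y} := by
  set W := (affineSpan ℝ μ.support).direction
  have hxA : x ∈ affineSpan ℝ μ.support := by
    rw [← affineSpan_convexHull]
    exact subset_affineSpan ℝ _ (intrinsicInterior_subset hx)
  obtain ⟨f, hf⟩ := Submodule.ClosedComplemented.of_finiteDimensional W
  set P : E →L[ℝ] E := W.subtypeL.comp f
  have hPW : ∀ w ∈ W, P w = w := fun w hw => congrArg Subtype.val (hf ⟨w, hw⟩)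
  have hPP : P.comp P = P := ContinuousLinearMap.ext fun v => hPW _ (f v).2
  -- `y - x ∈ W` almost surely, so only the restriction of `ℓ` to `W` matters
  have hsupp : ∀ᵐ y ∂μ, y ∈ μ.support := Measure.support_mem_ae
  have hW : ∀ᵐ y ∂μ, ∀ ℓ : E →L[ℝ] ℝ, ℓ y - ℓ x = ℓ.comp P y - ℓ.comp P x := hsupp.mono
    fun y hy ℓ => by
      have hyx := AffineSubspace.vsub_mem_direction (subset_affineSpan ℝ _ hy) hxA
      rw [← map_sub, ← map_sub, ContinuousLinearMap.comp_apply, hPW (y - x) hyx]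
  obtain ⟨c, hc, hcK⟩ :=
    exists_pos_le_measure_setOf_lt_of_mem_intrinsicInterior hx P fun v => (f v).2
  have hμ : μ ≠ 0 := Measure.nonempty_support_iff.1 <|
    convexHull_nonempty_iff.1 ⟨x, intrinsicInterior_subset hx⟩
  obtain ⟨c', hc'0, hc'⟩ := ENNReal.lt_iff_exists_nnreal_btwn.1 <|
    lt_min hc (Measure.measure_univ_pos.2 hμ)
  refine ⟨c', by exact_mod_cast hc'0, fun ℓ => ?_⟩
  by_cases h0 : ℓ.comp P = 0
  · refine (hc'.le.trans (min_le_right _ _)).trans (measure_mono_ae <| hW.mono fun y hy _ => ?_)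
    have := hy ℓ
    rw [h0, zero_apply, zero_apply, sub_zero, sub_eq_zero] at this
    exact this.ge
  have hnorm : 0 < ‖ℓ.comp P‖ := norm_pos_iff.2 h0
  set m := ‖ℓ.comp P‖⁻¹ • ℓ.comp P
  have hmP : m.comp P = m := by
    rw [ContinuousLinearMap.smul_comp, ContinuousLinearMap.comp_assoc, hPP]
  have hm1 : ‖m‖ = 1 := by
    rw [norm_smul, norm_inv, norm_norm, inv_mul_cancel₀ hnorm.ne']
  refine (hc'.le.trans (min_le_left _ _)).trans <| (hcK m hmP hm1).trans
    (measure_mono_ae <| hW.mono fun y hy (hxy : m x < m y) => ?_)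
  have hlt : ℓ.comp P x < ℓ.comp P y :=
    lt_of_mul_lt_mul_left (by simpa [m] using hxy) (inv_nonneg.2 hnorm.le)
  show ℓ x ≤ ℓ y
  linarith [hy ℓ]

end Mass

theorem LinearMap.exists_eq_dotProduct {R ι : Type*} [CommSemiring R] [Fintype ι]
    (f : (ι → R) →ₗ[R] R) : ∃ θ : ι → R, ∀ y, f y = θ ⬝ᵥ y := by
  classical
  exact ⟨fun i => f fun j => if i = j then 1 else 0, fun y => by
    simpa [dotProduct, mul_comm] using f.pi_apply_eq_sum_univ y⟩

section LogLaplace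

variable {d : ℕ}

noncomputable def laplaceTransform (μ : Measure (Fin d → ℝ)) (θ : Fin d → ℝ) : ℝ≥0∞ :=
  ∫⁻ x, ENNReal.ofReal (Real.exp (θ ⬝ᵥ x)) ∂μ

noncomputable def logLaplace (μ : Measure (Fin d → ℝ)) (θ : Fin d → ℝ) : EReal :=
  if laplaceTransform μ θ = ⊤ then ⊤ else (Real.log (laplaceTransform μ θ).toReal : EReal)

noncomputable def logLaplaceConjugate (μ : Measure (Fin d → ℝ)) (x : Fin d → ℝ) : EReal :=
  ⨆ θ ∈ {θ | laplaceTransform μ θ ≠ ⊤}, ((θ ⬝ᵥ x : ℝ) : EReal) - logLaplace μ θ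

variable {μ : Measure (Fin d → ℝ)}

theorem laplaceTransform_pos [NeZero μ] (θ : Fin d → ℝ) : 0 < laplaceTransform μ θ := by
  rw [laplaceTransform, lintegral_pos_iff_support (by fun_prop)]
  simp [Function.support, Real.exp_pos, NeZero.ne μ]

theorem exists_pos_mul_exp_le_laplaceTransform {x : Fin d → ℝ}
    (hx : x ∈ intrinsicInterior ℝ (convexHull ℝ μ.support)) :
    ∃ c : ℝ≥0, 0 < c ∧ ∀ θ, c * ENNReal.ofReal (Real.exp (θ ⬝ᵥ x)) ≤ laplaceTransform μ θ := by
  obtain ⟨c, hc, hle⟩ := exists_pos_le_measure_setOf_le_of_mem_intrinsicInterior hx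
  refine ⟨c, hc, fun θ => ?_⟩
  have hθ : c ≤ μ {y | θ ⬝ᵥ x ≤ θ ⬝ᵥ y} := by
    simpa using hle (LinearMap.toContinuousLinearMap (dotProductBilin ℝ ℝ θ))
  have hset : {y | θ ⬝ᵥ x ≤ θ ⬝ᵥ y} =
      {y | ENNReal.ofReal (Real.exp (θ ⬝ᵥ x)) ≤ ENNReal.ofReal (Real.exp (θ ⬝ᵥ y))} := by
    ext y
    simp [ENNReal.ofReal_le_ofReal_iff (Real.exp_pos _).le]
  calc (c : ℝ≥0∞) * ENNReal.ofReal (Real.exp (θ ⬝ᵥ x))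
      ≤ ENNReal.ofReal (Real.exp (θ ⬝ᵥ x)) * μ {y | θ ⬝ᵥ x ≤ θ ⬝ᵥ y} := by
        rw [mul_comm]
        gcongr
    _ ≤ laplaceTransform μ θ := hset ▸ mul_meas_ge_le_lintegral (by fun_prop) _

theorem logLaplaceConjugate_le_neg_log {x : Fin d → ℝ} {c : ℝ≥0} (hc : 0 < c)
    (h : ∀ θ, c * ENNReal.ofReal (Real.exp (θ ⬝ᵥ x)) ≤ laplaceTransform μ θ) :
    logLaplaceConjugate μ x ≤ ((-Real.log c : ℝ) : EReal) := by
  refine iSup₂_le fun θ (hθ : laplaceTransform μ θ ≠ ⊤) => ?_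
  rw [logLaplace, if_neg hθ, ← EReal.coe_sub, EReal.coe_le_coe_iff]
  have hle : c * Real.exp (θ ⬝ᵥ x) ≤ (laplaceTransform μ θ).toReal := by
    simpa [ENNReal.toReal_mul, Real.exp_nonneg] using ENNReal.toReal_mono hθ (h θ)
  have := Real.log_le_log (by positivity) hle
  rw [Real.log_mul (by positivity) (Real.exp_pos _).ne', Real.log_exp] at this
  linarith

theorem logLaplaceConjugate_eq_top_of_ae_le [IsProbabilityMeasure μ] {x θ : Fin d → ℝ} {u : ℝ}
    (hu : u < θ ⬝ᵥ x) (hae : ∀ᵐ y ∂μ, θ ⬝ᵥ y ≤ u) : logLaplaceConjugate μ x = ⊤ := by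
  have hL (n : ℕ) : laplaceTransform μ ((n : ℝ) • θ) ≤ ENNReal.ofReal (Real.exp (n * u)) := by
    calc laplaceTransform μ ((n : ℝ) • θ) ≤ ∫⁻ _, ENNReal.ofReal (Real.exp (n * u)) ∂μ :=
          lintegral_mono_ae <| hae.mono fun y hy => by
            gcongr
            rw [smul_dotProduct, smul_eq_mul]
            gcongr
      _ = _ := by simp
  have hterm (n : ℕ) : ((n * (θ ⬝ᵥ x - u) : ℝ) : EReal) ≤ logLaplaceConjugate μ x := by
    have hfin : laplaceTransform μ ((n : ℝ) • θ) ≠ ⊤ :=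
      ne_top_of_le_ne_top ENNReal.ofReal_ne_top (hL n)
    refine le_trans ?_ (le_biSup (fun θ' => ((θ' ⬝ᵥ x : ℝ) : EReal) - logLaplace μ θ') hfin)
    rw [logLaplace, if_neg hfin, ← EReal.coe_sub, EReal.coe_le_coe_iff, smul_dotProduct,
      smul_eq_mul]
    have := Real.log_le_log (ENNReal.toReal_pos (laplaceTransform_pos _).ne' hfin)
      (ENNReal.toReal_le_of_le_ofReal (Real.exp_nonneg _) (hL n))
    rw [Real.log_exp] at this
    linarith
  refine EReal.eq_top_iff_forall_lt _ |>.2 fun y => ?_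
  obtain ⟨n, hn⟩ := exists_nat_gt (y / (θ ⬝ᵥ x - u))
  refine lt_of_lt_of_le (EReal.coe_lt_coe_iff.2 ?_) (hterm n)
  rwa [div_lt_iff₀ (sub_pos.2 hu)] at hn

end LogLaplace

/-- the relative interior of the convex hull of the support of a
probability distribution `F` on `ℝ^d` equals the relative interior of the domain
of the Legendre conjugate `ψ` of its log-Laplace transform `φ`. -/
theorem intrinsicInterior_convexHull_support_eq_domain_conjugate
    (d : ℕ) (μ : Measure (Fin d → ℝ)) [IsProbabilityMeasure μ]
    (L : (Fin d → ℝ) → ℝ≥0∞)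
    (hL : ∀ θ, L θ = ∫⁻ x, ENNReal.ofReal (Real.exp (∑ i, θ i * x i)) ∂μ)
    (φ : (Fin d → ℝ) → EReal)
    (hφ : ∀ θ, φ θ = if L θ = ⊤ then (⊤ : EReal) else ((Real.log (L θ).toReal : ℝ) : EReal))
    (ψ : (Fin d → ℝ) → EReal)
    (hψ : ∀ x, ψ x = ⨆ θ ∈ {θ | L θ ≠ ⊤}, (((∑ i, θ i * x i : ℝ)) : EReal) - φ θ) :
    intrinsicInterior ℝ (convexHull ℝ {x | ∀ U ∈ nhds x, 0 < μ U})
      = intrinsicInterior ℝ {x | ψ x ≠ ⊤} := by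
  obtain rfl : L = laplaceTransform μ := funext hL
  obtain rfl : φ = logLaplace μ := funext hφ
  obtain rfl : ψ = logLaplaceConjugate μ := funext hψ
  have hsupp : {x | ∀ U ∈ nhds x, 0 < μ U} = μ.support := by
    ext x
    exact (μ.mem_support_iff_forall x).symm
  rw [hsupp]
  refine ((convex_convexHull ℝ _).intrinsicInterior_eq_of_intrinsicInterior_subset_of_subset_closure
    (fun x hx => ?_) fun x hx => ?_).symm
  · obtain ⟨c, hc, hle⟩ := exists_pos_mul_exp_le_laplaceTransform hx
    exact ne_top_of_le_ne_top (EReal.coe_ne_top _) (logLaplaceConjugate_le_neg_log hc hle)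
  · by_contra hxcl
    obtain ⟨ℓ, u, hu, hae⟩ := exists_ae_le_lt_of_notMem_closure_convexHull_support hxcl
    obtain ⟨θ, hθ⟩ := ℓ.toLinearMap.exists_eq_dotProduct
    exact hx <| logLaplaceConjugate_eq_top_of_ae_le (hθ x ▸ hu) (hae.mono fun y hy => hθ y ▸ hy)
end

section
/- Let F be a probability distribution on R^d, φ its log-Laplace transform and ψ its convex conjugate. If ψ(x) = 0 then x belongs to the relative interior of the domain of ψ. -/
open MeasureTheory Filter Topology Real
open scoped ENNReal InnerProductSpace
open Matrix WithLp

/-!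
Write `J θ = E exp ⟪θ, X - x⟫`, so that `ψ x = 0` says exactly `1 ≤ J`. Let `T` be the subspace of
directions `v` with `⟪v, X - x⟫ = 0` almost surely. `J` is invariant under translation by `T` and
equals `1` on `T`, which confines the domain of `ψ` to `x + Tᗮ`.

Conversely, Hölder gives `J (t • θ) ≤ J θ ^ t` for `t ∈ [0, 1]`. If `θₙ ∈ Tᗮ` had bounded `J` and
`‖θₙ‖ → ∞`, then along a convergent subsequence of directions `θₙ / ‖θₙ‖ → u`, Fatou would give
`J (2 • u) ≤ 1 ≤ J u`, hence `E (exp ⟪u, X - x⟫ - 1)² = J (2 • u) - 2 J u + 1 ≤ 0`, i.e. `u ∈ T`;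
but `u` is a unit vector of `Tᗮ`. So `J` grows exponentially in `‖θ‖` on `Tᗮ`, which makes `ψ`
bounded on a neighbourhood of `x` in `x + Tᗮ`.
-/

section Laplace

variable {E : Type*} [NormedAddCommGroup E] [InnerProductSpace ℝ E]

lemma continuous_ofReal_exp_inner_left (z : E) :
    Continuous fun θ : E ↦ ENNReal.ofReal (exp ⟪θ, z⟫_ℝ) :=
  ENNReal.continuous_ofReal.comp (by fun_prop)

variable [MeasurableSpace E] (ν : Measure E)

noncomputable def laplace (θ : E) : ℝ≥0∞ := ∫⁻ z, ENNReal.ofReal (exp ⟪θ, z⟫_ℝ) ∂ν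

def degenerateSubspace : Submodule ℝ E where
  carrier := {v | ∀ᵐ z ∂ν, ⟪v, z⟫_ℝ = 0}
  add_mem' {a b} (ha : ∀ᵐ z ∂ν, ⟪a, z⟫_ℝ = 0) (hb : ∀ᵐ z ∂ν, ⟪b, z⟫_ℝ = 0) :=
    (ha.and hb).mono fun z h ↦ by rw [inner_add_left, h.1, h.2, add_zero]
  zero_mem' := by simp
  smul_mem' c v (hv : ∀ᵐ z ∂ν, ⟪v, z⟫_ℝ = 0) :=
    hv.mono fun z h ↦ by rw [inner_smul_left, h, mul_zero]

/-- The effective domain of the convex conjugate of `log ∘ laplace ν`. -/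
def cramerDomain : Set E :=
  {v | ∃ b : ℝ, ∀ θ, ENNReal.ofReal (exp (⟪θ, v⟫_ℝ - b)) ≤ laplace ν θ}

variable {ν}

lemma mem_degenerateSubspace {v : E} :
    v ∈ degenerateSubspace ν ↔ ∀ᵐ z ∂ν, ⟪v, z⟫_ℝ = 0 :=
  Iff.rfl

lemma measurable_ofReal_exp_inner [OpensMeasurableSpace E] (θ : E) :
    Measurable fun z : E ↦ ENNReal.ofReal (exp ⟪θ, z⟫_ℝ) :=
  (ENNReal.continuous_ofReal.comp (by fun_prop)).measurable

lemma laplace_zero [IsProbabilityMeasure ν] : laplace ν 0 = 1 := by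
  simp [laplace]

lemma laplace_ne_zero [OpensMeasurableSpace E] [NeZero ν] (θ : E) : laplace ν θ ≠ 0 := fun h ↦
  have ⟨_, hz⟩ := ((lintegral_eq_zero_iff (measurable_ofReal_exp_inner θ)).1 h).exists
  (ENNReal.ofReal_pos.2 (exp_pos _)).ne' hz

lemma laplace_add_of_mem_degenerateSubspace {v : E} (hv : v ∈ degenerateSubspace ν) (θ : E) :
    laplace ν (θ + v) = laplace ν θ :=
  lintegral_congr_ae <| (mem_degenerateSubspace.1 hv).mono fun z hz ↦ by
    simp only [inner_add_left, hz, add_zero]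

lemma laplace_add_smul_le_rpow [OpensMeasurableSpace E] (θ₀ θ₁ : E) {p q : ℝ} (hp : 0 ≤ p)
    (hq : 0 ≤ q) (hpq : p + q = 1) :
    laplace ν (p • θ₀ + q • θ₁) ≤ laplace ν θ₀ ^ p * laplace ν θ₁ ^ q := by
  refine le_of_eq_of_le (lintegral_congr fun z ↦ ?_) <| ENNReal.lintegral_mul_norm_pow_le
    (measurable_ofReal_exp_inner θ₀).aemeasurable (measurable_ofReal_exp_inner θ₁).aemeasurable
    hp hq hpq
  rw [ENNReal.ofReal_rpow_of_pos (exp_pos _), ENNReal.ofReal_rpow_of_pos (exp_pos _),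
    ← ENNReal.ofReal_mul (by positivity), ← exp_mul, ← exp_mul, ← exp_add, inner_add_left,
    real_inner_smul_left, real_inner_smul_left, mul_comm p, mul_comm q]

lemma laplace_smul_le_rpow [OpensMeasurableSpace E] [IsProbabilityMeasure ν] (θ : E) {t : ℝ}
    (ht₀ : 0 ≤ t) (ht₁ : t ≤ 1) : laplace ν (t • θ) ≤ laplace ν θ ^ t := by
  simpa [laplace_zero] using laplace_add_smul_le_rpow (ν := ν) 0 θ (sub_nonneg.2 ht₁) ht₀
    (sub_add_cancel 1 t)

lemma laplace_le_liminf [OpensMeasurableSpace E] {θs : ℕ → E} {θ : E}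
    (h : Tendsto θs atTop (𝓝 θ)) :
    laplace ν θ ≤ liminf (fun n ↦ laplace ν (θs n)) atTop :=
  le_of_eq_of_le (lintegral_congr fun z ↦
      (((continuous_ofReal_exp_inner_left z).tendsto θ).comp h).liminf_eq.symm)
    (lintegral_liminf_le fun n ↦ measurable_ofReal_exp_inner (θs n))

lemma mem_degenerateSubspace_of_laplace_two_smul_le_one [OpensMeasurableSpace E]
    [IsProbabilityMeasure ν] {u : E} (h₁ : 1 ≤ laplace ν u) (h₂ : laplace ν ((2 : ℝ) • u) ≤ 1) :
    u ∈ degenerateSubspace ν := by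
  set f : E → ℝ≥0∞ := fun z ↦ ENNReal.ofReal ((exp ⟪u, z⟫_ℝ - 1) ^ 2)
  have hf : Measurable f := (ENNReal.continuous_ofReal.comp (by fun_prop)).measurable
  have key : ∫⁻ z, f z ∂ν + 2 * laplace ν u = laplace ν ((2 : ℝ) • u) + 1 := by
    calc ∫⁻ z, f z ∂ν + 2 * laplace ν u
        = ∫⁻ z, (f z + 2 * ENNReal.ofReal (exp ⟪u, z⟫_ℝ)) ∂ν := by
          rw [lintegral_add_left hf, lintegral_const_mul _ (measurable_ofReal_exp_inner u)]
          rfl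
      _ = ∫⁻ z, (ENNReal.ofReal (exp ⟪(2 : ℝ) • u, z⟫_ℝ) + 1) ∂ν := by
          refine lintegral_congr fun z ↦ ?_
          rw [← ENNReal.ofReal_ofNat 2, ← ENNReal.ofReal_one, ← ENNReal.ofReal_mul (by norm_num),
            ← ENNReal.ofReal_add (sq_nonneg _) (by positivity),
            ← ENNReal.ofReal_add (exp_pos _).le zero_le_one]
          congr 1
          rw [real_inner_smul_left, two_mul ⟪u, z⟫_ℝ, exp_add]
          ring
      _ = laplace ν ((2 : ℝ) • u) + 1 := by
          rw [lintegral_add_right _ measurable_const]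
          simp [laplace]
  have hfin : 2 * laplace ν u ≠ ⊤ :=
    ne_top_of_le_ne_top (b := 1 + 1) (by simp) ((le_add_self.trans key.le).trans (by gcongr))
  have hf0 : ∫⁻ z, f z ∂ν = 0 := by
    refine nonpos_iff_eq_zero.1 (ENNReal.le_of_add_le_add_right hfin ?_)
    calc ∫⁻ z, f z ∂ν + 2 * laplace ν u = laplace ν ((2 : ℝ) • u) + 1 := key
      _ ≤ 2 * 1 := by rw [two_mul]; gcongr
      _ ≤ 0 + 2 * laplace ν u := by rw [zero_add]; gcongr
  filter_upwards [(lintegral_eq_zero_iff hf).1 hf0] with z hz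
  have hsq : (exp ⟪u, z⟫_ℝ - 1) ^ 2 = 0 := le_antisymm (ENNReal.ofReal_eq_zero.1 hz) (sq_nonneg _)
  simpa [sub_eq_zero] using hsq

lemma laplace_smul_le_one_of_tendsto [OpensMeasurableSpace E] [IsProbabilityMeasure ν]
    {θs : ℕ → E} {K : ℝ} (hK : ∀ n, laplace ν (θs n) ≤ ENNReal.ofReal (exp K))
    (hθs : Tendsto (fun n ↦ ‖θs n‖) atTop atTop) {u : E}
    (hu : Tendsto (fun n ↦ ‖θs n‖⁻¹ • θs n) atTop (𝓝 u)) {c : ℝ} (hc : 0 ≤ c) :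
    laplace ν (c • u) ≤ 1 := by
  have hbound : ∀ᶠ n in atTop, laplace ν (c • ‖θs n‖⁻¹ • θs n) ≤
      ENNReal.ofReal (exp (c * ‖θs n‖⁻¹ * K)) := by
    filter_upwards [hθs.eventually_ge_atTop c, hθs.eventually_gt_atTop 0] with n hcn hpos
    rw [smul_smul]
    calc _ ≤ laplace ν (θs n) ^ (c * ‖θs n‖⁻¹) :=
          laplace_smul_le_rpow _ (by positivity) (by rwa [mul_inv_le_iff₀ hpos, one_mul])
      _ ≤ ENNReal.ofReal (exp K) ^ (c * ‖θs n‖⁻¹) := ENNReal.rpow_le_rpow (hK n) (by positivity)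
      _ = _ := by rw [ENNReal.ofReal_rpow_of_pos (exp_pos _), ← exp_mul, mul_comm K]
  have hlim : Tendsto (fun n ↦ ENNReal.ofReal (exp (c * ‖θs n‖⁻¹ * K))) atTop (𝓝 1) := by
    have h0 : Tendsto (fun n ↦ c * ‖θs n‖⁻¹ * K) atTop (𝓝 0) := by
      simpa using (hθs.inv_tendsto_atTop.const_mul c).mul_const K
    simpa [Function.comp_def] using
      ((ENNReal.continuous_ofReal.comp continuous_exp).tendsto 0).comp h0
  calc laplace ν (c • u) ≤ liminf (fun n ↦ laplace ν (c • ‖θs n‖⁻¹ • θs n)) atTop :=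
        laplace_le_liminf (hu.const_smul c)
    _ ≤ liminf (fun n ↦ ENNReal.ofReal (exp (c * ‖θs n‖⁻¹ * K))) atTop := liminf_le_liminf hbound
    _ = 1 := hlim.liminf_eq

lemma mem_degenerateSubspace_of_tendsto [OpensMeasurableSpace E] [IsProbabilityMeasure ν]
    (h : ∀ θ, 1 ≤ laplace ν θ) {θs : ℕ → E} {K : ℝ}
    (hK : ∀ n, laplace ν (θs n) ≤ ENNReal.ofReal (exp K))
    (hθs : Tendsto (fun n ↦ ‖θs n‖) atTop atTop) {u : E}
    (hu : Tendsto (fun n ↦ ‖θs n‖⁻¹ • θs n) atTop (𝓝 u)) : u ∈ degenerateSubspace ν :=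
  mem_degenerateSubspace_of_laplace_two_smul_le_one (h u)
    (laplace_smul_le_one_of_tendsto hK hθs hu zero_le_two)

lemma exists_laplace_ge_of_norm_ge [FiniteDimensional ℝ E] [OpensMeasurableSpace E]
    [IsProbabilityMeasure ν] (h : ∀ θ, 1 ≤ laplace ν θ) :
    ∃ R > 0, ∀ m ∈ (degenerateSubspace ν)ᗮ, R ≤ ‖m‖ → ENNReal.ofReal (exp 1) ≤ laplace ν m := by
  by_contra! hcon
  choose m hmT hm hmlt using fun n : ℕ ↦ hcon (n + 1) n.cast_add_one_pos
  have hmpos (n : ℕ) : 0 < ‖m n‖ := n.cast_add_one_pos.trans_le (hm n)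
  have hdir (n : ℕ) : ‖m n‖⁻¹ • m n ∈ Metric.sphere 0 1 ∩ ((degenerateSubspace ν)ᗮ : Set E) :=
    ⟨by simp [norm_smul, (hmpos n).ne'], Submodule.smul_mem _ _ (hmT n)⟩
  obtain ⟨u, ⟨hu1, huT⟩, κ, hκ, hlim⟩ := ((isCompact_sphere 0 1).inter_right
    (Submodule.isClosed_orthogonal _)).tendsto_subseq hdir
  have hnorm : Tendsto (fun n ↦ ‖m n‖) atTop atTop :=
    tendsto_atTop_mono hm (tendsto_atTop_add_const_right _ 1 tendsto_natCast_atTop_atTop)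
  have hudeg : u ∈ degenerateSubspace ν := mem_degenerateSubspace_of_tendsto h
    (fun k ↦ (hmlt (κ k)).le) (hnorm.comp hκ.tendsto_atTop) hlim
  have hu0 : u = 0 := (Submodule.mem_bot ℝ).1 <|
    (Submodule.orthogonal_disjoint _).le_bot ⟨hudeg, huT⟩
  simp [hu0] at hu1

lemma exists_laplace_ge_exp_norm [FiniteDimensional ℝ E] [OpensMeasurableSpace E]
    [IsProbabilityMeasure ν] (h : ∀ θ, 1 ≤ laplace ν θ) :
    ∃ a > 0, ∀ m ∈ (degenerateSubspace ν)ᗮ,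
      ENNReal.ofReal (exp (a * ‖m‖ - 1)) ≤ laplace ν m := by
  obtain ⟨R, hR, hRm⟩ := exists_laplace_ge_of_norm_ge h
  refine ⟨R⁻¹, inv_pos.2 hR, fun m hm ↦ ?_⟩
  rcases lt_or_ge ‖m‖ R with hlt | hge
  · refine le_trans ?_ (h m)
    rw [ENNReal.ofReal_le_one, exp_le_one_iff, sub_nonpos, inv_mul_le_iff₀ hR, mul_one]
    exact hlt.le
  have hm0 : 0 < ‖m‖ := hR.trans_le hge
  have hscaled : ENNReal.ofReal (exp 1) ≤ laplace ν m ^ (R / ‖m‖) :=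
    (hRm _ (Submodule.smul_mem _ _ hm) (by simp [norm_smul, abs_of_pos hR, hm0.ne'])).trans
      (laplace_smul_le_rpow m (by positivity) ((div_le_one hm0).2 hge))
  calc ENNReal.ofReal (exp (R⁻¹ * ‖m‖ - 1)) ≤ ENNReal.ofReal (exp 1) ^ (‖m‖ / R) := by
        rw [ENNReal.ofReal_rpow_of_pos (exp_pos _), ← exp_mul, one_mul, inv_mul_eq_div]
        gcongr
        linarith
    _ ≤ (laplace ν m ^ (R / ‖m‖)) ^ (‖m‖ / R) := ENNReal.rpow_le_rpow hscaled (by positivity)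
    _ = laplace ν m := by
        rw [← ENNReal.rpow_mul, div_mul_div_cancel₀ hm0.ne', div_self hR.ne', ENNReal.rpow_one]

lemma exists_forall_mem_orthogonal_norm_lt_mem_cramerDomain [FiniteDimensional ℝ E]
    [OpensMeasurableSpace E] [IsProbabilityMeasure ν] (h : ∀ θ, 1 ≤ laplace ν θ) :
    ∃ δ > 0, ∀ v ∈ (degenerateSubspace ν)ᗮ, ‖v‖ < δ → v ∈ cramerDomain ν := by
  obtain ⟨a, ha, hm⟩ := exists_laplace_ge_exp_norm h
  refine ⟨a, ha, fun v hv hva ↦ ⟨1, fun θ ↦ ?_⟩⟩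
  obtain ⟨q, hq, m, hmT, rfl⟩ := (degenerateSubspace ν).exists_add_mem_mem_orthogonal θ
  calc ENNReal.ofReal (exp (⟪q + m, v⟫_ℝ - 1)) ≤ ENNReal.ofReal (exp (a * ‖m‖ - 1)) := by
        gcongr
        rw [inner_add_left, Submodule.inner_right_of_mem_orthogonal hq hv, zero_add]
        calc ⟪m, v⟫_ℝ ≤ ‖m‖ * ‖v‖ := real_inner_le_norm m v
          _ ≤ a * ‖m‖ := by rw [mul_comm]; gcongr
    _ ≤ laplace ν m := hm m hmT
    _ = laplace ν (q + m) := by rw [add_comm, laplace_add_of_mem_degenerateSubspace hq]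

lemma cramerDomain_subset_orthogonal [IsProbabilityMeasure ν] :
    cramerDomain ν ⊆ (degenerateSubspace ν)ᗮ := by
  rintro v ⟨b, hb⟩
  rw [SetLike.mem_coe, Submodule.mem_orthogonal]
  intro q hq
  by_contra hne
  set s := (b + 1) / ⟪q, v⟫_ℝ
  have hs := hb (s • q)
  rw [← zero_add (s • q), laplace_add_of_mem_degenerateSubspace (Submodule.smul_mem _ s hq),
    laplace_zero, zero_add, ENNReal.ofReal_le_one, exp_le_one_iff, real_inner_smul_left,
    div_mul_cancel₀ _ hne] at hs
  linarith

theorem mem_intrinsicInterior_of_subset_of_inter_subset {𝕜 V P : Type*} [Ring 𝕜]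
    [AddCommGroup V] [Module 𝕜 V] [TopologicalSpace P] [AddTorsor V P] {s U : Set P} {x : P}
    (Q : AffineSubspace 𝕜 P) (hx : x ∈ s) (hsQ : s ⊆ Q) (hU : U ∈ 𝓝 x) (hUQ : U ∩ Q ⊆ s) :
    x ∈ intrinsicInterior 𝕜 s := by
  rw [mem_intrinsicInterior]
  refine ⟨⟨x, subset_affineSpan 𝕜 s hx⟩, ?_, rfl⟩
  rw [mem_interior_iff_mem_nhds]
  filter_upwards [continuous_subtype_val.continuousAt.preimage_mem_nhds hU] with y hy
  exact hUQ ⟨hy, affineSpan_le.2 hsQ y.2⟩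

theorem zero_mem_intrinsicInterior_cramerDomain [FiniteDimensional ℝ E] [OpensMeasurableSpace E]
    [IsProbabilityMeasure ν] (h : ∀ θ, 1 ≤ laplace ν θ) :
    (0 : E) ∈ intrinsicInterior ℝ (cramerDomain ν) := by
  obtain ⟨δ, hδ, hsmall⟩ := exists_forall_mem_orthogonal_norm_lt_mem_cramerDomain h
  refine mem_intrinsicInterior_of_subset_of_inter_subset (degenerateSubspace ν)ᗮ.toAffineSubspace
    ⟨0, fun θ ↦ by simpa using h θ⟩ cramerDomain_subset_orthogonal (Metric.ball_mem_nhds 0 hδ) ?_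
  rintro v ⟨hvδ, hvT⟩
  exact hsmall v hvT (mem_ball_zero_iff.1 hvδ)

end Laplace

lemma EReal.ne_top_iff_exists_le_coe {a : EReal} : a ≠ ⊤ ↔ ∃ b : ℝ, a ≤ b := by
  refine ⟨fun h ↦ ?_, fun ⟨b, hb⟩ ↦ (hb.trans_lt (EReal.coe_lt_top b)).ne⟩
  obtain ⟨b, hb, -⟩ := EReal.lt_iff_exists_real_btwn.1 (lt_top_iff_ne_top.2 h)
  exact ⟨b, hb.le⟩

lemma biSup_coe_sub_log_le_coe_iff {Θ : Type*} {L : Θ → ℝ≥0∞} (hL : ∀ θ, L θ ≠ 0) (f : Θ → ℝ)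
    (b : ℝ) :
    ⨆ θ ∈ {θ | L θ ≠ ⊤}, (f θ : EReal) - (if L θ = ⊤ then ⊤ else ((log (L θ).toReal : ℝ) : EReal))
      ≤ b ↔ ∀ θ, ENNReal.ofReal (exp (f θ - b)) ≤ L θ := by
  simp only [iSup₂_le_iff, Set.mem_ofPred_eq]
  refine forall_congr' fun θ ↦ ?_
  by_cases hθ : L θ = ⊤
  · simp [hθ]
  simp only [ne_eq, hθ, not_false_eq_true, forall_const, if_false]
  rw [← EReal.coe_sub, EReal.coe_le_coe_iff, sub_le_comm,
    le_log_iff_exp_le (ENNReal.toReal_pos (hL θ) hθ), ENNReal.ofReal_le_iff_le_toReal hθ]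

section Euclidean

variable {ι : Type*} [Fintype ι]

noncomputable def centeredEuclidean (x : ι → ℝ) : (ι → ℝ) ≃ᵃ[ℝ] EuclideanSpace ℝ ι :=
  (WithLp.linearEquiv 2 ℝ (ι → ℝ)).symm.toAffineEquiv.trans
    (AffineEquiv.vaddConst ℝ (toLp 2 x)).symm

lemma centeredEuclidean_apply (x y : ι → ℝ) : centeredEuclidean x y = toLp 2 (y - x) := rfl

lemma measurable_centeredEuclidean (x : ι → ℝ) : Measurable (centeredEuclidean x) :=
  (centeredEuclidean x).toAffineMap.continuous_of_finiteDimensional.measurable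

lemma inner_toLp_centeredEuclidean (θ x y : ι → ℝ) :
    ⟪toLp 2 θ, centeredEuclidean x y⟫_ℝ = θ ⬝ᵥ y - θ ⬝ᵥ x := by
  rw [centeredEuclidean_apply, EuclideanSpace.inner_toLp_toLp, star_trivial, dotProduct_comm,
    dotProduct_sub]

lemma laplace_map_centeredEuclidean (μ : Measure (ι → ℝ)) (x θ : ι → ℝ) :
    laplace (μ.map (centeredEuclidean x)) (toLp 2 θ) =
      ENNReal.ofReal (exp (-(θ ⬝ᵥ x))) * ∫⁻ z, ENNReal.ofReal (exp (θ ⬝ᵥ z)) ∂μ := by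
  rw [laplace, lintegral_map (measurable_ofReal_exp_inner _) (measurable_centeredEuclidean x),
    ← lintegral_const_mul' _ _ ENNReal.ofReal_ne_top]
  refine lintegral_congr fun z ↦ ?_
  rw [inner_toLp_centeredEuclidean, ← ENNReal.ofReal_mul (exp_pos _).le, ← exp_add, neg_add_eq_sub]

lemma ofReal_exp_inner_le_laplace_map_iff (μ : Measure (ι → ℝ)) (x θ y : ι → ℝ) (b : ℝ) :
    ENNReal.ofReal (exp (⟪toLp 2 θ, centeredEuclidean x y⟫_ℝ - b)) ≤
        laplace (μ.map (centeredEuclidean x)) (toLp 2 θ) ↔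
      ENNReal.ofReal (exp (θ ⬝ᵥ y - b)) ≤ ∫⁻ z, ENNReal.ofReal (exp (θ ⬝ᵥ z)) ∂μ := by
  rw [laplace_map_centeredEuclidean, inner_toLp_centeredEuclidean,
    show θ ⬝ᵥ y - θ ⬝ᵥ x - b = -(θ ⬝ᵥ x) + (θ ⬝ᵥ y - b) by ring, exp_add,
    ENNReal.ofReal_mul (exp_pos _).le,
    ENNReal.mul_le_mul_iff_right (ENNReal.ofReal_pos.2 (exp_pos _)).ne' ENNReal.ofReal_ne_top]

end Euclidean

/-- if the Legendre conjugate `ψ` of the log-Laplace transform of a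
probability distribution on `ℝ^d` vanishes at `x`, then `x` lies in the relative
interior of the domain of `ψ`. -/
theorem mem_intrinsicInterior_domain_of_conjugate_eq_zero
    (d : ℕ) (μ : Measure (Fin d → ℝ)) [IsProbabilityMeasure μ]
    (L : (Fin d → ℝ) → ℝ≥0∞)
    (hL : ∀ θ, L θ = ∫⁻ x, ENNReal.ofReal (Real.exp (∑ i, θ i * x i)) ∂μ)
    (φ : (Fin d → ℝ) → EReal)
    (hφ : ∀ θ, φ θ = if L θ = ⊤ then (⊤ : EReal) else ((Real.log (L θ).toReal : ℝ) : EReal))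
    (ψ : (Fin d → ℝ) → EReal)
    (hψ : ∀ x, ψ x = ⨆ θ ∈ {θ | L θ ≠ ⊤}, (((∑ i, θ i * x i : ℝ)) : EReal) - φ θ)
    (x : Fin d → ℝ) (hx : ψ x = 0) :
    x ∈ intrinsicInterior ℝ {y | ψ y ≠ ⊤} := by
  set e := centeredEuclidean x
  set ν := μ.map e
  have : IsProbabilityMeasure ν :=
    Measure.isProbabilityMeasure_map (measurable_centeredEuclidean x).aemeasurable
  have hL0 (θ : Fin d → ℝ) : L θ ≠ 0 := fun h ↦ laplace_ne_zero (ν := ν) (toLp 2 θ) <| by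
    rw [laplace_map_centeredEuclidean, mul_eq_zero]
    exact .inr ((hL θ).symm.trans h)
  have hψ_le (y : Fin d → ℝ) (b : ℝ) :
      ψ y ≤ b ↔ ∀ θ, ENNReal.ofReal (exp (⟪θ, e y⟫_ℝ - b)) ≤ laplace ν θ := by
    simp_rw [hψ, hφ]
    rw [biSup_coe_sub_log_le_coe_iff hL0, (WithLp.linearEquiv 2 ℝ _).symm.surjective.forall]
    refine forall_congr' fun θ ↦ ?_
    rw [ofReal_exp_inner_le_laplace_map_iff, hL]
    rfl
  have hdom : e '' {y | ψ y ≠ ⊤} = cramerDomain ν := by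
    refine (congrArg _ (Set.ext fun y ↦ ?_)).trans (e.surjective.image_preimage _)
    simp_rw [Set.mem_preimage, Set.mem_ofPred_eq, EReal.ne_top_iff_exists_le_coe, hψ_le]
    rfl
  have hex : e x = 0 := by simp [e, centeredEuclidean_apply]
  have h0 := zero_mem_intrinsicInterior_cramerDomain fun θ ↦ by
    simpa [hex] using (hψ_le x 0).1 hx.le θ
  rw [← hdom, AffineEquiv.intrinsicInterior_image, ← hex] at h0
  exact e.injective.mem_set_image.1 h0
end

section
/- Let F be an aperiodic distribution on Z^d with convex conjugate ψ of its log-Laplace transform. If (s_n) in Z^d satisfies sup_n |s_n/n| < ∞ and ψ(s_n/n) → 0, then for all b ∈ Z^d and m ∈ Z, ψ((s_n + b)/(n + m)) → 0 as n → ∞. -/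
/-!
Along any subsequence, Bolzano–Weierstrass gives a further subsequence on which `s_n / n → x₀`, and
the shifted points `(s_n + b) / (n + m)` converge to the same `x₀`. Lower semicontinuity of `ψ`
forces `ψ x₀ = 0`. Such a zero lies in the interior of the convex hull of the support of `F`:
otherwise a supporting functional `θ` has `⟨θ, u⟩ ≤ ⟨θ, x₀⟩` on the support, strictly somewhere
by aperiodicity, whence `log L θ < ⟨θ, x₀⟩` and `ψ x₀ > 0`. On that interior `ψ` is finite and
convex, hence continuous, so `ψ` also tends to `0` along the shifted points.
-/

open Filter Topology Set
open scoped ENNReal Pointwise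

theorem LowerSemicontinuousAt.le_of_tendsto {α γ ι : Type*} [TopologicalSpace α] [LinearOrder γ]
    [TopologicalSpace γ] [OrderTopology γ] [DenselyOrdered γ] {f : α → γ} {x : α}
    {l : Filter ι} [l.NeBot] {u : ι → α} {c : γ} (hf : LowerSemicontinuousAt f x)
    (hu : Tendsto u l (𝓝 x)) (hfu : Tendsto (f ∘ u) l (𝓝 c)) : f x ≤ c := by
  by_contra! h
  obtain ⟨y, hcy, hyx⟩ := exists_between h
  obtain ⟨k, hk₁, hk₂⟩ := ((hu.eventually (hf y hyx)).and (hfu.eventually (gt_mem_nhds hcy))).exists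
  exact lt_asymm hk₁ hk₂

theorem LinearMap.eq_zero_of_forall_eq_of_vectorSpan_eq_top {k V W : Type*} [Ring k]
    [AddCommGroup V] [Module k V] [AddCommGroup W] [Module k W] {S : Set V}
    (hS : vectorSpan k S = ⊤) (f : V →ₗ[k] W) {w : W} (hf : ∀ y ∈ S, f y = w) : f = 0 := by
  rw [← LinearMap.ker_eq_top, eq_top_iff, ← hS, vectorSpan_def, Submodule.span_le]
  rintro _ ⟨a, ha, b, hb, rfl⟩
  simp [vsub_eq_sub, hf a ha, hf b hb]

theorem vectorSpan_image_intCast_eq_top {ι : Type*} [Fintype ι] {T : Set (ι → ℤ)}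
    (hT : AddSubgroup.closure (T - T) = ⊤) :
    vectorSpan ℝ ((fun u => (Int.cast ∘ u : ι → ℝ)) '' T) = ⊤ := by
  classical
  set cast := AddMonoidHom.compLeft (Int.castAddHom ℝ) ι
  set V := vectorSpan ℝ ((fun u => (Int.cast ∘ u : ι → ℝ)) '' T)
  have hcast : ∀ z, cast z ∈ V := by
    have hle : T - T ⊆ (V.toAddSubgroup.comap cast : Set (ι → ℤ)) := by
      rintro _ ⟨u, hu, v, hv, rfl⟩
      show cast (u - v) ∈ V
      rw [map_sub]
      exact vsub_mem_vectorSpan ℝ (mem_image_of_mem _ hu) (mem_image_of_mem _ hv)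
    intro z
    exact (AddSubgroup.closure_le _).2 hle (hT ▸ AddSubgroup.mem_top z)
  rw [eq_top_iff, ← (Pi.basisFun ℝ ι).span_eq, Submodule.span_le]
  rintro _ ⟨i, rfl⟩
  have hsingle : Pi.basisFun ℝ ι i = cast (Pi.single i 1) := by
    ext j
    rcases eq_or_ne j i with rfl | hji <;> simp [cast, *]
  rw [SetLike.mem_coe, hsingle]
  exact hcast _

theorem exists_forall_abs_div_le {ι : Type*} [Fintype ι] {s : ℕ → ι → ℤ}
    (h : ∃ C : ℝ, ∀ n : ℕ, 1 ≤ n → ∑ i, |(s n i : ℝ) / n| ≤ C) :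
    ∃ C : ℝ, 0 ≤ C ∧ ∀ n i, |(s n i : ℝ) / n| ≤ C := by
  obtain ⟨C, hC⟩ := h
  refine ⟨max C 0, le_max_right _ _, fun n i => ?_⟩
  rcases Nat.eq_zero_or_pos n with rfl | hn
  · simp
  · exact ((Finset.single_le_sum (fun j _ => abs_nonneg ((s n j : ℝ) / n))
      (Finset.mem_univ i)).trans (hC n hn)).trans (le_max_left _ _)

theorem tendsto_add_div_add_sub_div {a : ℕ → ℝ}
    (ha : IsBoundedUnder (· ≤ ·) atTop fun n => |a n / n|) (β μ : ℝ) :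
    Tendsto (fun n : ℕ => (a n + β) / (n + μ) - a n / n) atTop (𝓝 0) := by
  have hinv : Tendsto (fun n : ℕ => ((n : ℝ) + μ)⁻¹) atTop (𝓝 0) :=
    tendsto_inv_atTop_zero.comp (tendsto_atTop_add_const_right _ μ tendsto_natCast_atTop_atTop)
  have hμ : Tendsto (fun n : ℕ => -μ * ((n : ℝ) + μ)⁻¹) atTop (𝓝 0) := by
    simpa using hinv.const_mul (-μ)
  have hβ : Tendsto (fun n : ℕ => β * ((n : ℝ) + μ)⁻¹) atTop (𝓝 0) := by
    simpa using hinv.const_mul β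
  have hlim := (isBoundedUnder_le_mul_tendsto_zero ha hμ).add hβ
  rw [add_zero] at hlim
  refine hlim.congr' ?_
  filter_upwards [tendsto_natCast_atTop_atTop.eventually_gt_atTop (max 0 (-μ))] with n hn
  have hn0 : (n : ℝ) ≠ 0 := by linarith [le_max_left 0 (-μ)]
  have hnμ : (n : ℝ) + μ ≠ 0 := by linarith [le_max_right 0 (-μ)]
  field_simp
  ring

theorem tsum_ofReal_eq_one {α : Type*} {f : α → ℝ} (hf0 : ∀ a, 0 ≤ f a) (hf1 : ∑' a, f a = 1) :
    ∑' a, ENNReal.ofReal (f a) = 1 := by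
  have hf : Summable f := by
    by_contra h
    simp [tsum_eq_zero_of_not_summable h] at hf1
  rw [← ENNReal.ofReal_tsum_of_nonneg hf0 hf, hf1, ENNReal.ofReal_one]

theorem exists_pos_of_tsum_eq_one {α : Type*} {f : α → ℝ} (hf0 : ∀ a, 0 ≤ f a)
    (hf1 : ∑' a, f a = 1) : ∃ a, 0 < f a := by
  by_contra! h
  have h0 : ∀ a, f a = 0 := fun a => le_antisymm (h a) (hf0 a)
  simp [h0] at hf1

section ConvexConjugate

variable {ι : Type*} [Fintype ι] {Θ : Set (ι → ℝ)} {g : (ι → ℝ) → ℝ} {x y : ι → ℝ}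

/-- The convex conjugate of `g` restricted to `Θ`, i.e. of `g` plus the indicator of `Θ`. -/
noncomputable def convexConjugate (Θ : Set (ι → ℝ)) (g : (ι → ℝ) → ℝ) (x : ι → ℝ) : EReal :=
  ⨆ θ ∈ Θ, ((θ ⬝ᵥ x - g θ : ℝ) : EReal)

theorem le_convexConjugate {θ : ι → ℝ} (hθ : θ ∈ Θ) :
    ((θ ⬝ᵥ x - g θ : ℝ) : EReal) ≤ convexConjugate Θ g x :=
  le_iSup₂ (f := fun θ (_ : θ ∈ Θ) => ((θ ⬝ᵥ x - g θ : ℝ) : EReal)) θ hθ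

theorem convexConjugate_le_coe_iff {M : ℝ} :
    convexConjugate Θ g x ≤ M ↔ ∀ θ ∈ Θ, θ ⬝ᵥ x - g θ ≤ M := by
  simp only [convexConjugate, iSup₂_le_iff, EReal.coe_le_coe_iff]

theorem sub_le_toReal_convexConjugate {θ : ι → ℝ} (hθ : θ ∈ Θ) (hx : convexConjugate Θ g x ≠ ⊤) :
    θ ⬝ᵥ x - g θ ≤ (convexConjugate Θ g x).toReal :=
  EReal.coe_le_coe_iff.1 ((le_convexConjugate hθ).trans (EReal.le_coe_toReal hx))

theorem convexConjugate_nonneg (h0 : 0 ∈ Θ) (hg0 : g 0 ≤ 0) : 0 ≤ convexConjugate Θ g x :=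
  (EReal.coe_nonneg.2 (by simpa using hg0)).trans (le_convexConjugate h0)

theorem convexConjugate_ne_bot (hΘ : Θ.Nonempty) : convexConjugate Θ g x ≠ ⊥ :=
  let ⟨_, hθ⟩ := hΘ
  ne_bot_of_le_ne_bot (EReal.coe_ne_bot _) (le_convexConjugate hθ)

theorem lowerSemicontinuous_convexConjugate : LowerSemicontinuous (convexConjugate Θ g) :=
  lowerSemicontinuous_biSup fun θ _ =>
    (continuous_coe_real_ereal.comp
      (by fun_prop : Continuous fun x => θ ⬝ᵥ x - g θ)).lowerSemicontinuous

theorem convexConjugate_combo_le (hx : convexConjugate Θ g x ≠ ⊤) (hy : convexConjugate Θ g y ≠ ⊤)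
    {a b : ℝ} (ha : 0 ≤ a) (hb : 0 ≤ b) (hab : a + b = 1) :
    convexConjugate Θ g (a • x + b • y) ≤
      ↑(a * (convexConjugate Θ g x).toReal + b * (convexConjugate Θ g y).toReal) := by
  refine convexConjugate_le_coe_iff.2 fun θ hθ => ?_
  have hx' := sub_le_toReal_convexConjugate hθ hx
  have hy' := sub_le_toReal_convexConjugate hθ hy
  calc θ ⬝ᵥ (a • x + b • y) - g θ = a * (θ ⬝ᵥ x - g θ) + b * (θ ⬝ᵥ y - g θ) := by
        rw [dotProduct_add, dotProduct_smul, dotProduct_smul, smul_eq_mul, smul_eq_mul]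
        linear_combination g θ * hab
    _ ≤ _ := by gcongr

theorem convex_setOf_convexConjugate_ne_top : Convex ℝ {x | convexConjugate Θ g x ≠ ⊤} :=
  fun _ hx _ hy _ _ ha hb hab =>
    ne_top_of_le_ne_top (EReal.coe_ne_top _) (convexConjugate_combo_le hx hy ha hb hab)

theorem convexOn_toReal_convexConjugate (hΘ : Θ.Nonempty) :
    ConvexOn ℝ {x | convexConjugate Θ g x ≠ ⊤} fun x => (convexConjugate Θ g x).toReal :=
  ⟨convex_setOf_convexConjugate_ne_top, fun _ hx _ hy _ _ ha hb hab =>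
    (EReal.toReal_le_toReal (convexConjugate_combo_le hx hy ha hb hab)
      (convexConjugate_ne_bot hΘ) (EReal.coe_ne_top _)).trans_eq (EReal.toReal_coe _)⟩

theorem continuousAt_convexConjugate (hΘ : Θ.Nonempty)
    (hx : x ∈ interior {y | convexConjugate Θ g y ≠ ⊤}) :
    ContinuousAt (convexConjugate Θ g) x := by
  have hreal := ((convexOn_toReal_convexConjugate hΘ).continuousOn_interior x hx).continuousAt
    (isOpen_interior.mem_nhds hx)
  refine (continuous_coe_real_ereal.continuousAt.comp hreal).congr ?_
  filter_upwards [mem_interior_iff_mem_nhds.1 hx] with y hy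
  exact EReal.coe_toReal hy (convexConjugate_ne_bot hΘ)

end ConvexConjugate

section LatticeLaplace

variable {ι : Type*} [Fintype ι] {F : (ι → ℤ) → ℝ}

noncomputable def latticeLaplace (F : (ι → ℤ) → ℝ) (θ : ι → ℝ) : ℝ≥0∞ :=
  ∑' u, ENNReal.ofReal (F u * Real.exp (θ ⬝ᵥ (Int.cast ∘ u)))

noncomputable def rateFunction (F : (ι → ℤ) → ℝ) : (ι → ℝ) → EReal :=
  convexConjugate {θ | latticeLaplace F θ ≠ ⊤} fun θ => Real.log (latticeLaplace F θ).toReal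

def realSupport (F : (ι → ℤ) → ℝ) : Set (ι → ℝ) :=
  (fun u => (Int.cast ∘ u : ι → ℝ)) '' {u | 0 < F u}

theorem latticeLaplace_zero (hF0 : ∀ u, 0 ≤ F u) (hF1 : ∑' u, F u = 1) :
    latticeLaplace F 0 = 1 := by
  simpa [latticeLaplace] using tsum_ofReal_eq_one hF0 hF1

theorem ofReal_le_latticeLaplace (θ : ι → ℝ) (u : ι → ℤ) :
    ENNReal.ofReal (F u * Real.exp (θ ⬝ᵥ (Int.cast ∘ u))) ≤ latticeLaplace F θ :=
  ENNReal.le_tsum u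

theorem dotProduct_le_log_latticeLaplace {θ : ι → ℝ} (hθ : latticeLaplace F θ ≠ ⊤) {u : ι → ℤ}
    (hu : 0 < F u) :
    θ ⬝ᵥ (Int.cast ∘ u) ≤ Real.log (latticeLaplace F θ).toReal - Real.log (F u) := by
  have hle := Real.log_le_log (by positivity)
    ((ENNReal.ofReal_le_iff_le_toReal hθ).1 (ofReal_le_latticeLaplace θ u))
  rw [Real.log_mul hu.ne' (Real.exp_pos _).ne', Real.log_exp] at hle
  linarith

theorem latticeLaplace_lt_ofReal_exp (hF0 : ∀ u, 0 ≤ F u) (hF1 : ∑' u, F u = 1)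
    {θ : ι → ℝ} {c : ℝ} (hle : ∀ u, 0 < F u → θ ⬝ᵥ (Int.cast ∘ u) ≤ c) {u₀ : ι → ℤ}
    (hu₀ : 0 < F u₀) (hlt : θ ⬝ᵥ (Int.cast ∘ u₀) < c) :
    latticeLaplace F θ < ENNReal.ofReal (Real.exp c) := by
  have hterm : ∀ u, ENNReal.ofReal (F u * Real.exp (θ ⬝ᵥ (Int.cast ∘ u))) ≤
      ENNReal.ofReal (F u) * ENNReal.ofReal (Real.exp c) := fun u => by
    rw [← ENNReal.ofReal_mul (hF0 u)]
    rcases (hF0 u).eq_or_lt with h | h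
    · simp [← h]
    · exact ENNReal.ofReal_le_ofReal (by gcongr; exact hle u h)
  have hterm₀ : ENNReal.ofReal (F u₀ * Real.exp (θ ⬝ᵥ (Int.cast ∘ u₀))) <
      ENNReal.ofReal (F u₀) * ENNReal.ofReal (Real.exp c) := by
    rw [← ENNReal.ofReal_mul (hF0 u₀)]
    exact (ENNReal.ofReal_lt_ofReal_iff (by positivity)).2 (by gcongr)
  have hsum : ∑' u, ENNReal.ofReal (F u) * ENNReal.ofReal (Real.exp c) =
      ENNReal.ofReal (Real.exp c) := by
    rw [ENNReal.tsum_mul_right, tsum_ofReal_eq_one hF0 hF1, one_mul]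
  calc latticeLaplace F θ < ∑' u, ENNReal.ofReal (F u) * ENNReal.ofReal (Real.exp c) :=
        ENNReal.tsum_lt_tsum (ne_top_of_le_ne_top (by rw [hsum]; exact ENNReal.ofReal_ne_top)
          (ENNReal.tsum_le_tsum hterm)) hterm hterm₀
    _ = _ := hsum

theorem log_latticeLaplace_lt (hF0 : ∀ u, 0 ≤ F u) (hF1 : ∑' u, F u = 1)
    {θ : ι → ℝ} {c : ℝ} (hle : ∀ u, 0 < F u → θ ⬝ᵥ (Int.cast ∘ u) ≤ c) {u₀ : ι → ℤ}
    (hu₀ : 0 < F u₀) (hlt : θ ⬝ᵥ (Int.cast ∘ u₀) < c) :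
    latticeLaplace F θ ≠ ⊤ ∧ Real.log (latticeLaplace F θ).toReal < c := by
  have hlt' := latticeLaplace_lt_ofReal_exp hF0 hF1 hle hu₀ hlt
  have hθ := hlt'.ne_top
  have hpos : 0 < (latticeLaplace F θ).toReal := lt_of_lt_of_le (by positivity)
    ((ENNReal.ofReal_le_iff_le_toReal hθ).1 (ofReal_le_latticeLaplace θ u₀))
  exact ⟨hθ, (Real.log_lt_iff_lt_exp hpos).2 (ENNReal.toReal_lt_of_lt_ofReal hlt')⟩

theorem vectorSpan_realSupport_eq_top
    (haper : AddSubgroup.closure {z : ι → ℤ | ∃ u v, 0 < F u ∧ 0 < F v ∧ z = u - v} = ⊤) :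
    vectorSpan ℝ (realSupport F) = ⊤ := by
  refine vectorSpan_image_intCast_eq_top (Eq.trans ?_ haper)
  congr 1
  ext z
  simp [Set.mem_sub, eq_comm]

theorem eq_rateFunction {L : (ι → ℝ) → ℝ≥0∞} (hL : ∀ θ, L θ = latticeLaplace F θ)
    {φ : (ι → ℝ) → EReal}
    (hφ : ∀ θ, φ θ = if L θ = ⊤ then ⊤ else ((Real.log (L θ).toReal : ℝ) : EReal))
    {ψ : (ι → ℝ) → EReal}
    (hψ : ∀ x, ψ x = ⨆ θ ∈ {θ | L θ ≠ ⊤}, ((θ ⬝ᵥ x : ℝ) : EReal) - φ θ) :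
    ψ = rateFunction F := by
  obtain rfl : L = latticeLaplace F := funext hL
  funext x
  rw [hψ x]
  exact iSup_congr fun θ => iSup_congr fun hθ => by rw [hφ, if_neg hθ, ← EReal.coe_sub]

theorem rateFunction_nonneg (hF0 : ∀ u, 0 ≤ F u) (hF1 : ∑' u, F u = 1) (x : ι → ℝ) :
    0 ≤ rateFunction F x :=
  convexConjugate_nonneg (by simp [latticeLaplace_zero hF0 hF1])
    (by simp [latticeLaplace_zero hF0 hF1])

theorem lowerSemicontinuous_rateFunction : LowerSemicontinuous (rateFunction F) :=
  lowerSemicontinuous_convexConjugate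

theorem continuousAt_rateFunction (hF0 : ∀ u, 0 ≤ F u) (hF1 : ∑' u, F u = 1) {x : ι → ℝ}
    (hx : x ∈ interior {y | rateFunction F y ≠ ⊤}) : ContinuousAt (rateFunction F) x :=
  continuousAt_convexConjugate ⟨0, by simp [latticeLaplace_zero hF0 hF1]⟩ hx

theorem rateFunction_intCast_le {u : ι → ℤ} (hu : 0 < F u) :
    rateFunction F (Int.cast ∘ u) ≤ ↑(-Real.log (F u)) :=
  convexConjugate_le_coe_iff.2 fun _ hθ => by linarith [dotProduct_le_log_latticeLaplace hθ hu]

theorem convexHull_realSupport_subset :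
    convexHull ℝ (realSupport F) ⊆ {x | rateFunction F x ≠ ⊤} := by
  refine convexHull_min ?_ convex_setOf_convexConjugate_ne_top
  rintro _ ⟨u, hu, rfl⟩
  exact ne_top_of_le_ne_top (EReal.coe_ne_top _) (rateFunction_intCast_le hu)

theorem mem_interior_convexHull_realSupport (hF0 : ∀ u, 0 ≤ F u) (hF1 : ∑' u, F u = 1)
    (hspan : vectorSpan ℝ (realSupport F) = ⊤) {x : ι → ℝ} (hx : rateFunction F x ≤ 0) :
    x ∈ interior (convexHull ℝ (realSupport F)) := by
  classical
  have hS : (realSupport F).Nonempty :=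
    let ⟨u₀, hu₀⟩ := exists_pos_of_tsum_eq_one hF0 hF1
    ⟨_, u₀, hu₀, rfl⟩
  have hint : (interior (convexHull ℝ (realSupport F))).Nonempty := by
    rw [(convex_convexHull ℝ _).interior_nonempty_iff_affineSpan_eq_top, affineSpan_convexHull,
      AffineSubspace.affineSpan_eq_top_iff_vectorSpan_eq_top_of_nonempty ℝ _ _ hS]
    exact hspan
  by_contra hx'
  obtain ⟨f, c, hf0, hfS, hcx⟩ := geometric_hahn_banach_of_nonempty_interior
    (convex_convexHull ℝ _) (convex_singleton x) (disjoint_singleton_right.2 hx') hint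
    (singleton_nonempty x)
  set θ : ι → ℝ := fun i => f fun j => if i = j then 1 else 0
  have hfθ : ∀ y, f y = θ ⬝ᵥ y := fun y => by
    rw [dotProduct_comm]
    exact (f : (ι → ℝ) →ₗ[ℝ] ℝ).pi_apply_eq_sum_univ y
  have hle : ∀ u, 0 < F u → θ ⬝ᵥ (Int.cast ∘ u) ≤ θ ⬝ᵥ x := fun u hu => by
    rw [← hfθ, ← hfθ]
    exact (hfS _ (subset_convexHull ℝ _ ⟨u, hu, rfl⟩)).trans (hcx x rfl)
  by_cases hconst : ∀ u, 0 < F u → θ ⬝ᵥ (Int.cast ∘ u) = θ ⬝ᵥ x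
  · refine hf0 (ContinuousLinearMap.coe_injective
      (LinearMap.eq_zero_of_forall_eq_of_vectorSpan_eq_top hspan _ (w := θ ⬝ᵥ x) ?_))
    rintro _ ⟨u, hu, rfl⟩
    simp [hfθ, hconst u hu]
  · push Not at hconst
    obtain ⟨u, hu, hne⟩ := hconst
    obtain ⟨hθ, hlog⟩ := log_latticeLaplace_lt hF0 hF1 hle hu ((hle u hu).lt_of_ne hne)
    have := convexConjugate_le_coe_iff.1 (EReal.coe_zero ▸ hx) θ hθ
    linarith

end LatticeLaplace

/-- for an aperiodic distribution `F` on `ℤ^d`, if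
`sup_n |s_n/n|₁ < ∞` and `ψ(s_n/n) → 0`, then for every `b ∈ ℤ^d` and `m ∈ ℤ`,
`ψ((s_n + b)/(n + m)) → 0`. -/
theorem conjugate_tendsto_zero_shifted
    (d : ℕ) (F : (Fin d → ℤ) → ℝ)
    (hF0 : ∀ y, 0 ≤ F y) (hF1 : ∑' y, F y = 1)
    (haper : AddSubgroup.closure
        {z : Fin d → ℤ | ∃ u v, 0 < F u ∧ 0 < F v ∧ z = u - v} = ⊤)
    (L : (Fin d → ℝ) → ℝ≥0∞)
    (hL : ∀ θ, L θ = ∑' x : Fin d → ℤ,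
        ENNReal.ofReal (F x * Real.exp (∑ i, θ i * (x i : ℝ))))
    (φ : (Fin d → ℝ) → EReal)
    (hφ : ∀ θ, φ θ = if L θ = ⊤ then (⊤ : EReal)
        else ((Real.log (L θ).toReal : ℝ) : EReal))
    (ψ : (Fin d → ℝ) → EReal)
    (hψ : ∀ x, ψ x = ⨆ θ ∈ {θ | L θ ≠ ⊤},
        (((∑ i, θ i * x i : ℝ)) : EReal) - φ θ)
    (s : ℕ → (Fin d → ℤ))
    (hbdd : ∃ C : ℝ, ∀ n : ℕ, 1 ≤ n → (∑ i, |(s n i : ℝ) / n|) ≤ C)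
    (hpsi : Tendsto (fun n : ℕ => ψ (fun i => (s n i : ℝ) / n)) atTop
        (nhds (0 : EReal))) :
    ∀ (b : Fin d → ℤ) (m : ℤ),
      Tendsto (fun n : ℕ => ψ (fun i => ((s n i : ℝ) + (b i : ℝ)) / ((n : ℝ) + (m : ℝ))))
        atTop (nhds (0 : EReal)) := by
  intro b m
  obtain rfl : ψ = rateFunction F := eq_rateFunction hL hφ hψ
  obtain ⟨C, hC0, hC⟩ := exists_forall_abs_div_le hbdd
  have hshift : Tendsto (fun n : ℕ => (fun i => ((s n i : ℝ) + b i) / ((n : ℝ) + m)) -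
      fun i => (s n i : ℝ) / n) atTop (𝓝 0) :=
    tendsto_pi_nhds.2 fun i => by
      simpa using tendsto_add_div_add_sub_div (isBoundedUnder_of ⟨C, fun n => hC n i⟩) (b i) m
  refine tendsto_of_subseq_tendsto fun ns hns => ?_
  obtain ⟨x₀, -, ms, hms, hx₀⟩ := tendsto_subseq_of_bounded
    (x := fun n i => (s (ns n) i : ℝ) / ns n) (Metric.isBounded_closedBall (x := 0) (r := C))
    fun n => mem_closedBall_zero_iff.2 <| (pi_norm_le_iff_of_nonneg hC0).2 fun i => hC (ns n) i
  have hnsms := hns.comp hms.tendsto_atTop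
  have hzero : rateFunction F x₀ = 0 := le_antisymm
    (LowerSemicontinuousAt.le_of_tendsto (lowerSemicontinuous_rateFunction x₀) hx₀
      (hpsi.comp hnsms))
    (rateFunction_nonneg hF0 hF1 x₀)
  have hint := interior_mono convexHull_realSupport_subset
    (mem_interior_convexHull_realSupport hF0 hF1 (vectorSpan_realSupport_eq_top haper) hzero.le)
  have hz : Tendsto (fun k i => ((s (ns (ms k)) i : ℝ) + b i) / ((ns (ms k) : ℝ) + m)) atTop
      (𝓝 x₀) := by
    simpa using hx₀.add (hshift.comp hnsms)
  exact ⟨ms, hzero ▸ (continuousAt_rateFunction hF0 hF1 hint).tendsto.comp hz⟩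
end

section
/- Let (Y_ℓ) be i.i.d. random variables on N^d × N^{d-1} with law: V = v_i with probability a_i (where v_i is the i-th basis vector of N^{d-1} for i < d, and v_d = 0), and conditionally on V = v_i, U ~ p^{(i)}. If the d-type offspring distribution p = (p^{(i)}) is aperiodic (the subgroup of Z^d generated by ∪_i (supp p^{(i)} - supp p^{(i)}) is Z^d) and a > 0 with Σ a_i = 1, then the law of Y = (U,V) on Z^{2d-1} is aperiodic. -/
/-!
Points of the support lying in one fibre `V = v_i` differ by `(u - u', 0)` with
`u, u' ∈ supp p^{(i)}`, so aperiodicity of `p` puts all of `ℤ^d × 0` in the group generated by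
differences. Comparing a fibre `v_i` with the fibre `v_d = 0` gives `(u - u', v_i)`, hence
`(0, v_i)`, and the `v_i` with `i < d` are the standard basis of `ℤ^{d-1}`.
-/

open Set Pointwise

theorem setOf_exists_sub_eq_sub {G : Type*} [AddGroup G] (P : G → Prop) :
    {z | ∃ y y', P y ∧ P y' ∧ z = y - y'} = {y | P y} - {y | P y} := by
  ext z
  simp [Set.mem_sub, eq_comm]

theorem AddSubgroup.closure_range_eq_top_of_forall_single_mem {ι : Type*} {n : ℕ}
    (v : ι → Fin n → ℤ) (hv : ∀ j, Pi.single j 1 ∈ range v) :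
    AddSubgroup.closure (range v) = ⊤ := by
  have hspan : Submodule.span ℤ (range v) = ⊤ := by
    rw [eq_top_iff, ← (Pi.basisFun ℤ (Fin n)).span_eq]
    refine Submodule.span_mono ?_
    rintro _ ⟨j, rfl⟩
    simpa using hv j
  rw [← Submodule.span_int_eq_addSubgroupClosure, hspan, Submodule.top_toAddSubgroup]

theorem AddSubgroup.closure_sub_self_prod_eq_top {ι M N : Type*}
    [AddCommGroup M] [AddCommGroup N] {A : Set (M × N)} {B : ι → Set M} {v : ι → N}
    (hBA : ∀ i, ∀ u ∈ B i, (u, v i) ∈ A) (hB : ∀ i, (B i).Nonempty)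
    {i₀ : ι} (hv₀ : v i₀ = 0)
    (hM : closure (⋃ i, B i - B i) = ⊤) (hN : closure (range v) = ⊤) :
    closure (A - A) = ⊤ := by
  set H := closure (A - A)
  have hinl : ∀ x : M, (x, (0 : N)) ∈ H := by
    suffices (closure (⋃ i, B i - B i)).map (AddMonoidHom.inl M N) ≤ H by
      intro x
      exact this (AddSubgroup.mem_map_of_mem _ (hM ▸ AddSubgroup.mem_top x))
    rw [AddMonoidHom.map_closure, closure_le]
    rintro _ ⟨_, hx, rfl⟩
    obtain ⟨i, u, hu, u', hu', rfl⟩ := mem_iUnion.1 hx |>.imp fun i h => mem_sub.1 h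
    exact subset_closure ⟨_, hBA i u hu, _, hBA i u' hu', by simp⟩
  have hinr_v : ∀ i, ((0 : M), v i) ∈ H := by
    intro i
    obtain ⟨u, hu⟩ := hB i
    obtain ⟨u', hu'⟩ := hB i₀
    have hdiff : (u - u', v i) ∈ H :=
      subset_closure ⟨_, hBA i u hu, _, hBA i₀ u' hu', by simp [hv₀]⟩
    simpa using sub_mem hdiff (hinl (u - u'))
  have hinr : ∀ w : N, ((0 : M), w) ∈ H := by
    suffices (closure (range v)).map (AddMonoidHom.inr M N) ≤ H by
      intro w
      exact this (AddSubgroup.mem_map_of_mem _ (hN ▸ AddSubgroup.mem_top w))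
    rw [AddMonoidHom.map_closure, closure_le]
    rintro _ ⟨_, ⟨i, rfl⟩, rfl⟩
    exact hinr_v i
  rw [eq_top_iff]
  rintro ⟨x, w⟩ -
  simpa using add_mem (hinl x) (hinr w)

theorem exists_pos_of_tsum_ne_zero {α : Type*} {f : α → ℝ} (hf : ∀ x, 0 ≤ f x)
    (h : ∑' x, f x ≠ 0) : ∃ x, 0 < f x := by
  by_contra! hpos
  have : f = 0 := funext fun x => (hpos x).antisymm (hf x)
  simp [this] at h

theorem law_of_Y_aperiodic_general
    (d : ℕ) (hd : 1 ≤ d)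
    (p : Fin d → (Fin d → ℤ) → ℝ)
    (hp0 : ∀ i x, 0 ≤ p i x) (hp1 : ∀ i, ∑' x, p i x = 1)
    (hpaper : AddSubgroup.closure
        (⋃ i : Fin d, {z : Fin d → ℤ | ∃ u v, 0 < p i u ∧ 0 < p i v ∧ z = u - v})
        = ⊤)
    (a : Fin d → ℝ) (ha : ∀ i, 0 < a i)
    (v : Fin d → (Fin (d - 1) → ℤ))
    (hv : ∀ i j, v i j = if (i : ℕ) = (j : ℕ) then 1 else 0)
    (F : (Fin d → ℤ) × (Fin (d - 1) → ℤ) → ℝ)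
    (hF : ∀ u w, F (u, w) = ∑ i, if w = v i then a i * p i u else 0) :
    AddSubgroup.closure
      {z : (Fin d → ℤ) × (Fin (d - 1) → ℤ) | ∃ y y', 0 < F y ∧ 0 < F y' ∧
        z = y - y'} = ⊤ := by
  classical
  have hF_pos : ∀ i u, 0 < p i u → 0 < F (u, v i) := by
    intro i u hu
    rw [hF]
    refine Finset.sum_pos' (fun j _ => ?_)
      ⟨i, Finset.mem_univ i, by simpa using mul_pos (ha i) hu⟩
    split_ifs
    exacts [mul_nonneg (ha j).le (hp0 j u), le_rfl]
  have hv_last : v ⟨d - 1, by omega⟩ = 0 := by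
    funext j
    simp only [hv, Pi.zero_apply, ite_eq_right_iff]
    omega
  have hv_single : ∀ j : Fin (d - 1), Pi.single j 1 ∈ range v := fun j =>
    ⟨Fin.castLE (by omega) j,
      funext fun k => by simp [hv, Pi.single_apply, Fin.ext_iff, eq_comm]⟩
  rw [setOf_exists_sub_eq_sub]
  refine AddSubgroup.closure_sub_self_prod_eq_top (B := fun i => {u | 0 < p i u}) hF_pos
    (fun i => exists_pos_of_tsum_ne_zero (hp0 i) (by simp [hp1 i])) hv_last ?_
    (AddSubgroup.closure_range_eq_top_of_forall_single_mem v hv_single)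
  simpa only [← setOf_exists_sub_eq_sub] using hpaper

/-- if the `d`-type offspring distribution `p` is aperiodic and
`a` is a positive probability vector on `[d]`, then the law of `Y = (U, V)` on
`ℤ^d × ℤ^{d-1} ≅ ℤ^{2d-1}` is aperiodic, where `P(V = v_i) = a_i` (with `v_i`
the `i`-th basis vector for `i < d` and `v_d = 0`) and `U ~ p^{(i)}`
conditionally on `V = v_i`. -/
theorem law_of_Y_aperiodic
    (d : ℕ) (hd : 1 ≤ d)
    (p : Fin d → (Fin d → ℤ) → ℝ)
    (hp0 : ∀ i x, 0 ≤ p i x) (hp1 : ∀ i, ∑' x, p i x = 1)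
    (hpnn : ∀ i x, p i x ≠ 0 → ∀ j, 0 ≤ x j)
    (hpaper : AddSubgroup.closure
        (⋃ i : Fin d, {z : Fin d → ℤ | ∃ u v, 0 < p i u ∧ 0 < p i v ∧ z = u - v})
        = ⊤)
    (a : Fin d → ℝ) (ha : ∀ i, 0 < a i) (ha1 : ∑ i, a i = 1)
    (v : Fin d → (Fin (d - 1) → ℤ))
    (hv : ∀ i j, v i j = if (i : ℕ) = (j : ℕ) then 1 else 0)
    (F : (Fin d → ℤ) × (Fin (d - 1) → ℤ) → ℝ)
    (hF : ∀ u w, F (u, w) = ∑ i, if w = v i then a i * p i u else 0) :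
    AddSubgroup.closure
      {z : (Fin d → ℤ) × (Fin (d - 1) → ℤ) | ∃ y y', 0 < F y ∧ 0 < F y' ∧
        z = y - y'} = ⊤ :=
  law_of_Y_aperiodic_general d hd p hp0 hp1 hpaper a ha v hv F hF
end
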